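/- For every k ≥ 1/4 and every t ∈ (0, ∞) with t ≠ 1, one has √((k·(log t)² + 1)² − (log t)²) − (k·(log t)² + 1) + ((t+1)/(t−1))·log t ≥ 0. -/

import Mathlib

/-!
Write `L = log t` and `A = k L² + 1`. Since `k ≥ 1/4` we have `L² ≤ 4 (A - 1)`, which is exactly
`(A - 2)² ≤ A² - L²`, so `√(A² - L²) ≥ A - 2`. It remains to see `(t + 1) / (t - 1) · log t ≥ 2`:
for `t > 1` this is `log t ≥ 2 (t - 1) / (t + 1)`, the first term of the series of `log t` in
powers of `(t - 1) / (t + 1)`, all of whose terms are nonnegative; the case `t < 1` follows by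
passing to `1 / t`.
-/

open Real

theorem sub_two_le_sqrt_sq_sub_sq {a b : ℝ} (h : b ^ 2 ≤ 4 * (a - 1)) :
    a - 2 ≤ √(a ^ 2 - b ^ 2) := by
  rcases le_or_gt a 2 with ha | ha
  · linarith [sqrt_nonneg (a ^ 2 - b ^ 2)]
  · exact (le_sqrt' (by linarith)).mpr (by nlinarith)

theorem two_mul_sub_one_div_add_one_le_log {t : ℝ} (ht : 1 ≤ t) :
    2 * (t - 1) / (t + 1) ≤ log t := by
  have hsum := hasSum_log_one_add (a := t - 1) (by linarith)
  have hfirst := le_hasSum hsum 0 fun k _ ↦ by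
    have hratio : 0 ≤ (t - 1) / (t - 1 + 2) := div_nonneg (by linarith) (by linarith)
    positivity
  calc 2 * (t - 1) / (t + 1)
        = 2 * (1 / (2 * ((0 : ℕ) : ℝ) + 1)) * ((t - 1) / (t - 1 + 2)) ^ (2 * 0 + 1) := by
          push_cast
          ring
    _ ≤ log (1 + (t - 1)) := hfirst
    _ = log t := by rw [add_sub_cancel]

theorem log_le_two_mul_sub_one_div_add_one {t : ℝ} (ht : 0 < t) (ht1 : t ≤ 1) :
    log t ≤ 2 * (t - 1) / (t + 1) := by
  have h := two_mul_sub_one_div_add_one_le_log (one_le_inv_iff₀.mpr ⟨ht, ht1⟩)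
  rw [log_inv] at h
  have heq : 2 * (t⁻¹ - 1) / (t⁻¹ + 1) = -(2 * (t - 1) / (t + 1)) := by
    field_simp
    ring
  linarith

theorem two_le_add_one_div_sub_one_mul_log {t : ℝ} (ht : 0 < t) (ht1 : t ≠ 1) :
    2 ≤ (t + 1) / (t - 1) * log t := by
  rw [div_mul_eq_mul_div]
  rcases ht1.lt_or_gt with hlt | hgt
  · have h := log_le_two_mul_sub_one_div_add_one ht hlt.le
    rw [le_div_iff_of_neg (by linarith)]
    rw [le_div_iff₀ (by linarith)] at h
    linarith
  · have h := two_mul_sub_one_div_add_one_le_log hgt.le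
    rw [le_div_iff₀ (by linarith)]
    rw [div_le_iff₀ (by linarith)] at h
    linarith

theorem rtilde_nonneg (k : ℝ) (hk : 1 / 4 ≤ k) (t : ℝ) (ht : 0 < t) (ht1 : t ≠ 1) :
    0 ≤ Real.sqrt ((k * Real.log t ^ 2 + 1) ^ 2 - Real.log t ^ 2)
        - (k * Real.log t ^ 2 + 1) + (t + 1) / (t - 1) * Real.log t := by
  have hroot : k * log t ^ 2 + 1 - 2 ≤ √((k * log t ^ 2 + 1) ^ 2 - log t ^ 2) :=
    sub_two_le_sqrt_sq_sub_sq (by nlinarith [sq_nonneg (log t)])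
  have hlog := two_le_add_one_div_sub_one_mul_log ht ht1
  linarith
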